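/- Let S : ℕ → ℤ satisfy the Tribonacci rule, i.e., S(n+3) = S(n+2) + S(n+1) + S(n) for all n. Then there exists a unique sequence Q : ℕ → ℚ satisfying the Tribonacci rule with Q(n+1) − Q(n) = S(n) for all n. Moreover, Q takes only integer values if and only if S(0) ≡ S(2) (mod 2). -/
import Mathlib

private def trib (a b c : ℚ) : ℕ → ℚ
  | 0 => a
  | 1 => b
  | 2 => c
  | n + 3 => trib a b c (n + 2) + trib a b c (n + 1) + trib a b c n

private lemma trib_unique (f g : ℕ → ℚ)
    (hf : ∀ n, f (n + 3) = f (n + 2) + f (n + 1) + f n)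
    (hg : ∀ n, g (n + 3) = g (n + 2) + g (n + 1) + g n)
    (h0 : f 0 = g 0) (h1 : f 1 = g 1) (h2 : f 2 = g 2) : ∀ n, f n = g n := by
  have key : ∀ n, f n = g n ∧ f (n + 1) = g (n + 1) ∧ f (n + 2) = g (n + 2) := by
    intro n
    induction n with
    | zero => exact ⟨h0, h1, h2⟩
    | succ k ih => exact ⟨ih.2.1, ih.2.2, by rw [hf, hg, ih.1, ih.2.1, ih.2.2]⟩
  exact fun n => (key n).1

/-- Every Tribonacci-like integer sequence `S` has a unique Tribonacci-like
    difference-inverse `Q` (a priori with rational values), and `Q` is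
    integer-valued if and only if `S(0) ≡ S(2) (mod 2)`
    (i.e., `S` is not of parity type EEOO). -/
theorem difference_inverse_exists_unique (S : ℕ → ℤ)
    (hS : ∀ n : ℕ, S (n + 3) = S (n + 2) + S (n + 1) + S n) :
    (∃! Q : ℕ → ℚ, (∀ n : ℕ, Q (n + 3) = Q (n + 2) + Q (n + 1) + Q n) ∧
        ∀ n : ℕ, Q (n + 1) - Q n = (S n : ℚ)) ∧
      ∀ Q : ℕ → ℚ, (∀ n : ℕ, Q (n + 3) = Q (n + 2) + Q (n + 1) + Q n) →
        (∀ n : ℕ, Q (n + 1) - Q n = (S n : ℚ)) →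
        ((∀ n : ℕ, ∃ z : ℤ, Q n = (z : ℚ)) ↔ S 0 % 2 = S 2 % 2) := by
  set q0 : ℚ := ((S 2 : ℚ) - S 0) / 2 with hq0
  set q1 : ℚ := q0 + S 0 with hq1
  set q2 : ℚ := q1 + S 1 with hq2
  set Q : ℕ → ℚ := trib q0 q1 q2 with hQdef
  have hQtrib : ∀ n, Q (n + 3) = Q (n + 2) + Q (n + 1) + Q n := by
    intro n; simp [hQdef, trib]
  have hQ0 : Q 0 = q0 := rfl
  have hQ1 : Q 1 = q1 := rfl
  have hQ2 : Q 2 = q2 := rfl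
  have hQdiff : ∀ n, Q (n + 1) - Q n = (S n : ℚ) := by
    have hD : ∀ n, (fun n => Q (n + 1) - Q n) (n + 3) =
        (fun n => Q (n + 1) - Q n) (n + 2) + (fun n => Q (n + 1) - Q n) (n + 1) +
        (fun n => Q (n + 1) - Q n) n := by
      intro n
      have h1 := hQtrib n
      have h2 := hQtrib (n + 1)
      simp only []
      have : n + 1 + 3 = n + 4 := by ring
      simp only [show n+1+3 = n+4 from rfl, show n+1+2 = n+3 from rfl,
        show n+1+1 = n+2 from rfl, show n+2+1 = n+3 from rfl,
        show n+3+1 = n+4 from rfl] at *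
      linarith
    have hScast : ∀ n, ((S (n + 3) : ℚ)) = (S (n + 2) : ℚ) + S (n + 1) + S n := by
      intro n; exact_mod_cast hS n
    have := trib_unique (fun n => Q (n + 1) - Q n) (fun n => (S n : ℚ)) hD hScast
      (by simp only [hQ0, hQ1, hq1]; ring)
      (by simp only [hQ1, hQ2, hq2]; ring)
      (by
        have h3 : Q 3 = Q 2 + Q 1 + Q 0 := hQtrib 0
        simp only [show (2:ℕ)+1 = 3 from rfl, h3, hQ0, hQ1, hQ2, hq2, hq1, hq0]
        ring)
    exact this
  -- key fact: any valid Q' has Q' 0 = q0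
  have hstart : ∀ Q' : ℕ → ℚ, (∀ n, Q' (n + 3) = Q' (n + 2) + Q' (n + 1) + Q' n) →
      (∀ n, Q' (n + 1) - Q' n = (S n : ℚ)) → Q' 0 = q0 := by
    intro Q' ht hd
    have h0 := hd 0
    have h2 := hd 2
    have h3 := ht 0
    simp only [show (2:ℕ)+1 = 3 from rfl] at h2
    rw [hq0]; linarith
  constructor
  · refine ⟨Q, ⟨hQtrib, hQdiff⟩, ?_⟩
    rintro Q' ⟨ht, hd⟩
    have h0 : Q' 0 = Q 0 := by rw [hQ0]; exact hstart Q' ht hd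
    have h1 : Q' 1 = Q 1 := by
      have := hd 0; have := hQdiff 0; linarith
    have h2 : Q' 2 = Q 2 := by
      have := hd 1; have := hQdiff 1; linarith
    funext n
    exact trib_unique Q' Q ht hQtrib h0 h1 h2 n
  · intro Q' ht hd
    have h0 : Q' 0 = ((S 2 : ℚ) - S 0) / 2 := hstart Q' ht hd
    constructor
    · rintro h
      obtain ⟨z, hz⟩ := h 0
      rw [h0] at hz
      have : (S 2 : ℚ) - S 0 = 2 * z := by field_simp at hz; linarith
      have : S 2 - S 0 = 2 * z := by exact_mod_cast this
      omega
    · intro h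
      obtain ⟨z0, hz0⟩ : 2 ∣ S 2 - S 0 := by omega
      have hQ'0 : Q' 0 = (z0 : ℚ) := by
        rw [h0]
        have : (S 2 : ℚ) - S 0 = 2 * z0 := by exact_mod_cast hz0
        rw [this]; ring
      intro n
      induction n with
      | zero => exact ⟨z0, hQ'0⟩
      | succ k ih =>
        obtain ⟨z, hz⟩ := ih
        refine ⟨z + S k, ?_⟩
        have := hd k
        push_cast
        linarith
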